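/- arXiv:2605.10300 — 3 statements merged into one kernel-verified Lean document; each statement's English description precedes it below -/
import Mathlib

section
/- The double sum H(q) := Σ_{n≥0} (−1)^n q^{3n²+2n} (1+q^{2n+1}) Σ_{|j|≤n} (−1)^j q^{−j²} can be rewritten as H(q) = Σ_{n+j≥0, n−j≥0} (−1)^{n+j} q^{3n²−j²+2n} − Σ_{n+j<0, n−j<0} (−1)^{n+j} q^{3n²−j²+2n}, where the sums run over integers n,j (each sum converges absolutely for |q|<1). -/
open scoped BigOperators

/-- `H(q) = Σ_{n ≥ 0} (−1)ⁿ q^{3n²+2n}(1 + q^{2n+1}) Σ_{|j| ≤ n} (−1)ʲ q^{−j²}`. -/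
noncomputable def Hq (q : ℂ) : ℂ :=
  ∑' n : ℕ, (-1 : ℂ) ^ n * q ^ (3 * n ^ 2 + 2 * n) * (1 + q ^ (2 * n + 1)) *
    ∑ j ∈ Finset.Icc (-(n : ℤ)) (n : ℤ), (-1 : ℂ) ^ j * q ^ (-j ^ 2)

/-!
With `F(n, j) = (-1)^{n+j} q^{3n²−j²+2n}`, the `n`-th summand of `H(q)` is
`Σ_{|j| ≤ n} (F(n, j) − F(−n−1, j))`: the factor `1 + q^{2n+1}` splits into the two terms, and
`n ↦ −n−1` flips the sign `(−1)^n`. Summing over `n` reassembles the cone `|j| ≤ n` row by row,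
and the involution `(n, j) ↦ (−n−1, j)` carries that cone onto the cone `|j| < −n`. Both double sums
converge absolutely because on both cones the exponent is at least `|n| + |j|`.
-/

namespace Hecke

def heckeTerm {K : Type*} [DivisionRing K] (q : K) (p : ℤ × ℤ) : K :=
  (-1 : K) ^ (p.1 + p.2) * q ^ (3 * p.1 ^ 2 - p.2 ^ 2 + 2 * p.1)

def posCone : Set (ℤ × ℤ) := {p | 0 ≤ p.1 + p.2 ∧ 0 ≤ p.1 - p.2}

def negCone : Set (ℤ × ℤ) := {p | p.1 + p.2 < 0 ∧ p.1 - p.2 < 0}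

def reflect (p : ℤ × ℤ) : ℤ × ℤ := (-p.1 - 1, p.2)

lemma reflect_involutive : Function.Involutive reflect := fun p => by simp [reflect]

lemma reflect_mem_negCone_iff {p : ℤ × ℤ} : reflect p ∈ negCone ↔ p ∈ posCone := by
  simp only [reflect, negCone, posCone, Set.mem_ofPred_eq]
  omega

def posConeEquivNegCone : posCone ≃ negCone :=
  (reflect_involutive.toPerm reflect).subtypeEquiv fun _ => reflect_mem_negCone_iff.symm

def posConeEquivSigma : posCone ≃ Σ m : ℕ, Finset.Icc (-(m : ℤ)) m where
  toFun p := ⟨p.1.1.toNat, p.1.2, Finset.mem_Icc.2 <| by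
    obtain ⟨⟨n, j⟩, h₁, h₂⟩ := p
    dsimp only at *
    omega⟩
  invFun x := ⟨(x.1, x.2), by
    obtain ⟨m, j, hj⟩ := x
    rw [Finset.mem_Icc] at hj
    exact ⟨by dsimp only; omega, by dsimp only; omega⟩⟩
  left_inv p := by
    obtain ⟨⟨n, j⟩, h₁, h₂⟩ := p
    ext
    · dsimp only at h₁ h₂ ⊢
      omega
    · rfl
  right_inv _ := rfl

theorem hasSum_sum_Icc_of_hasSum_posCone {α : Type*} [AddCommMonoid α] [TopologicalSpace α]
    [ContinuousAdd α] [RegularSpace α] {f : ℤ × ℤ → α} {a : α}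
    (h : HasSum (fun p : posCone => f p) a) :
    HasSum (fun m : ℕ => ∑ j ∈ Finset.Icc (-(m : ℤ)) m, f (m, j)) a := by
  rw [← posConeEquivSigma.symm.hasSum_iff] at h
  exact h.sigma fun m => Finset.hasSum _ (fun j => f (m, j))

lemma summable_pow_natAbs_add_natAbs {r : ℝ} (h0 : 0 ≤ r) (h1 : r < 1) :
    Summable fun p : ℤ × ℤ => r ^ (p.1.natAbs + p.2.natAbs) := by
  have hg : Summable fun n : ℤ => r ^ n.natAbs := by
    apply Summable.of_nat_of_neg <;> simpa using summable_geometric_of_lt_one h0 h1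
  simpa only [pow_add] using
    hg.mul_of_nonneg hg (fun _ => pow_nonneg h0 _) (fun _ => pow_nonneg h0 _)

lemma norm_zpow_le_pow_of_le {K : Type*} [NormedDivisionRing K] {q : K} (hq : ‖q‖ ≤ 1)
    {k : ℕ} {e : ℤ} (hke : k ≤ e) : ‖q ^ e‖ ≤ ‖q‖ ^ k := by
  lift e to ℕ using (Int.natCast_nonneg k).trans hke
  rw [zpow_natCast, norm_pow]
  exact pow_le_pow_of_le_one (norm_nonneg q) hq (mod_cast hke)

lemma summable_heckeTerm_of_le_exponent {K : Type*} [NormedDivisionRing K] [CompleteSpace K]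
    {q : K} (hq : ‖q‖ < 1) {s : Set (ℤ × ℤ)}
    (hs : ∀ p ∈ s, ((p.1.natAbs + p.2.natAbs : ℕ) : ℤ) ≤ 3 * p.1 ^ 2 - p.2 ^ 2 + 2 * p.1) :
    Summable fun p : s => heckeTerm q p := by
  refine ((summable_pow_natAbs_add_natAbs (norm_nonneg q) hq).subtype s).of_norm_bounded
    fun p => ?_
  rw [heckeTerm, norm_mul, norm_zpow, norm_neg, norm_one, one_zpow, one_mul]
  exact norm_zpow_le_pow_of_le hq.le (hs p.1 p.2)

lemma natAbs_add_natAbs_le_of_mem_posCone {p : ℤ × ℤ} (hp : p ∈ posCone) :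
    ((p.1.natAbs + p.2.natAbs : ℕ) : ℤ) ≤ 3 * p.1 ^ 2 - p.2 ^ 2 + 2 * p.1 := by
  obtain ⟨n, j⟩ := p
  obtain ⟨h₁, h₂⟩ := hp
  push_cast [Int.natCast_natAbs]
  rw [abs_of_nonneg (by omega : 0 ≤ n)]
  rcases abs_cases j with ⟨hj, _⟩ | ⟨hj, _⟩ <;> nlinarith

lemma natAbs_add_natAbs_le_of_mem_negCone {p : ℤ × ℤ} (hp : p ∈ negCone) :
    ((p.1.natAbs + p.2.natAbs : ℕ) : ℤ) ≤ 3 * p.1 ^ 2 - p.2 ^ 2 + 2 * p.1 := by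
  obtain ⟨n, j⟩ := p
  obtain ⟨h₁, h₂⟩ := hp
  push_cast [Int.natCast_natAbs]
  rw [abs_of_neg (by omega : n < 0)]
  rcases abs_cases j with ⟨hj, _⟩ | ⟨hj, _⟩ <;> nlinarith

-- The side condition rules out `a = j ^ 2 ≠ 0`, where `0 ^ 0 = 1` but `0 ^ a * 0 ^ (-a) = 0`.
lemma zpow_natCast_sub_sq {K : Type*} [DivisionRing K] (q : K) {a : ℕ} {j : ℤ}
    (h : j ^ 2 < a ∨ j = 0 ∧ a = 0) : q ^ ((a : ℤ) - j ^ 2) = q ^ a * q ^ (-j ^ 2) := by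
  rw [sub_eq_add_neg, zpow_add', zpow_natCast]
  rcases h with h | ⟨rfl, rfl⟩
  · exact Or.inr (Or.inl (by omega))
  · simp

lemma heckeTerm_sub_heckeTerm_reflect {K : Type*} [Field K] (q : K) {m : ℕ} {j : ℤ}
    (hj : j ∈ Finset.Icc (-(m : ℤ)) m) :
    heckeTerm q ((m : ℤ), j) - heckeTerm q (reflect ((m : ℤ), j)) =
      (-1 : K) ^ m * q ^ (3 * m ^ 2 + 2 * m) * (1 + q ^ (2 * m + 1)) *
        ((-1 : K) ^ j * q ^ (-j ^ 2)) := by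
  rw [Finset.mem_Icc] at hj
  have hsq : j ^ 2 ≤ (m : ℤ) ^ 2 := sq_le_sq' hj.1 hj.2
  have hsign : (-1 : K) ^ (-(m : ℤ) - 1 + j) = -((-1 : K) ^ m * (-1 : K) ^ j) := by
    rw [show -(m : ℤ) - 1 + j = (m + j) + -(2 * m + 1 : ℤ) by ring, zpow_add₀ (by norm_num),
      zpow_add₀ (by norm_num), zpow_natCast,
      Odd.neg_one_zpow (⟨-m - 1, by ring⟩ : Odd (-(2 * (m : ℤ) + 1)))]
    ring
  have hpos : j ^ 2 < ((3 * m ^ 2 + 2 * m : ℕ) : ℤ) ∨ j = 0 ∧ 3 * m ^ 2 + 2 * m = 0 := by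
    rcases Nat.eq_zero_or_pos m with rfl | hm
    · exact Or.inr ⟨by simpa using hsq, rfl⟩
    · left; push_cast; nlinarith
  have hneg : j ^ 2 < ((3 * m ^ 2 + 2 * m + (2 * m + 1) : ℕ) : ℤ) := by push_cast; nlinarith
  simp only [heckeTerm, reflect]
  rw [show 3 * (m : ℤ) ^ 2 - j ^ 2 + 2 * m = ((3 * m ^ 2 + 2 * m : ℕ) : ℤ) - j ^ 2 by
      push_cast; ring,
    show 3 * (-(m : ℤ) - 1) ^ 2 - j ^ 2 + 2 * (-(m : ℤ) - 1)
      = ((3 * m ^ 2 + 2 * m + (2 * m + 1) : ℕ) : ℤ) - j ^ 2 by push_cast; ring,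
    zpow_natCast_sub_sq q hpos, zpow_natCast_sub_sq q (Or.inl hneg), pow_add, hsign,
    zpow_add₀ (by norm_num), zpow_natCast]
  ring

end Hecke

open Hecke in
/-- `H(q)` equals the bilateral Hecke-type double sum
`Σ_{n+j ≥ 0, n−j ≥ 0} (−1)^{n+j} q^{3n²−j²+2n} − Σ_{n+j < 0, n−j < 0} (−1)^{n+j} q^{3n²−j²+2n}`. -/
theorem stmt2 (q : ℂ) (hq : ‖q‖ < 1) :
    Hq q =
      (∑' p : {p : ℤ × ℤ // 0 ≤ p.1 + p.2 ∧ 0 ≤ p.1 - p.2},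
          (-1 : ℂ) ^ ((p : ℤ × ℤ).1 + (p : ℤ × ℤ).2) *
            q ^ (3 * (p : ℤ × ℤ).1 ^ 2 - (p : ℤ × ℤ).2 ^ 2 + 2 * (p : ℤ × ℤ).1)) -
      ∑' p : {p : ℤ × ℤ // p.1 + p.2 < 0 ∧ p.1 - p.2 < 0},
          (-1 : ℂ) ^ ((p : ℤ × ℤ).1 + (p : ℤ × ℤ).2) *
            q ^ (3 * (p : ℤ × ℤ).1 ^ 2 - (p : ℤ × ℤ).2 ^ 2 + 2 * (p : ℤ × ℤ).1) := by
  have hPos : Summable fun p : posCone => heckeTerm q p :=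
    summable_heckeTerm_of_le_exponent hq fun _ => natAbs_add_natAbs_le_of_mem_posCone
  have hNeg : Summable fun p : negCone => heckeTerm q p :=
    summable_heckeTerm_of_le_exponent hq fun _ => natAbs_add_natAbs_le_of_mem_negCone
  have hNeg' : Summable fun p : posCone => heckeTerm q (reflect p) :=
    (posConeEquivNegCone.summable_iff (f := fun p : negCone => heckeTerm q p)).mpr hNeg
  calc Hq q = ∑' m : ℕ, ∑ j ∈ Finset.Icc (-(m : ℤ)) m,
        (heckeTerm q ((m : ℤ), j) - heckeTerm q (reflect ((m : ℤ), j))) := by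
        refine tsum_congr fun m => ?_
        rw [Finset.mul_sum]
        exact Finset.sum_congr rfl fun j hj => (heckeTerm_sub_heckeTerm_reflect q hj).symm
    _ = ∑' p : posCone, heckeTerm q p - ∑' p : posCone, heckeTerm q (reflect p) :=
        (hasSum_sum_Icc_of_hasSum_posCone (f := fun p => heckeTerm q p - heckeTerm q (reflect p))
          (hPos.hasSum.sub hNeg'.hasSum)).tsum_eq
    _ = ∑' p : posCone, heckeTerm q p - ∑' p : negCone, heckeTerm q p :=
        congrArg _ (posConeEquivNegCone.tsum_eq fun p : negCone => heckeTerm q p)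
end

section
/- The theta function Θ(τ) := Σ_{n∈ℤ} q^{n²} (with q = e^{2πiτ}, τ in the upper half-plane) satisfies Θ(τ) = η(2τ)⁵ / (η(τ)² η(4τ)²), where η(τ) := q^{1/24} Π_{n≥1} (1−q^n) is the Dedekind eta function. -/
open Complex

open scoped Real

/-- Dedekind eta function `η(τ) = e^{πiτ/12} ∏_{n ≥ 1} (1 − e^{2πinτ})`. -/
noncomputable def dedekindEta (τ : ℂ) : ℂ :=
  Complex.exp (π * I * τ / 12) * ∏' n : ℕ, (1 - Complex.exp (2 * π * I * τ) ^ (n + 1))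

/-- Theta function `Θ(τ) = Σ_{n ∈ ℤ} e^{2πi n² τ}`. -/
noncomputable def jacobiThetaQ (τ : ℂ) : ℂ :=
  ∑' n : ℤ, Complex.exp (2 * π * I * (n : ℂ) ^ 2 * τ)

/-!
Gauss's identity `∑ q^(n²) = ∏ (1 - q^(2n)) (1 + q^(2n-1))²` is the limit `m → ∞` of its finite
form `∑ₙ [2m, m+n]_{q²} q^(n²) = ∏_{j<m} (1 + q^(2j+1))²`, which follows by induction on `m` from
the two q-Pascal rules. The termwise limit is justified by dominated convergence: for `‖p‖ < 1`
the Gaussian binomials `[N, k]_p` are bounded uniformly in `N` and `k`, and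
`[2m, m+n]_{q²} → 1 / (q²; q²)_∞`. Splitting `∏ (1 + q^n)` into odd and even factors and using
`(x; x)_∞ ∏ (1 + x^n) = (x²; x²)_∞` turns `∏ (1 + q^(2n-1))` into
`(q²; q²)_∞² / ((q; q)_∞ (q⁴; q⁴)_∞)`. The prefactors `q^(1/24)` of the three eta values cancel
because `5 · 2 = 2 · 1 + 2 · 4`.
-/

open Finset Filter Topology

section QBinomial

variable {R : Type*} [CommRing R]

def qPochhammer (p : R) (m : ℕ) : R :=
  ∏ i ∈ range m, (1 - p ^ (i + 1))

lemma qPochhammer_zero (p : R) : qPochhammer p 0 = 1 :=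
  prod_range_zero _

lemma qPochhammer_succ (p : R) (m : ℕ) :
    qPochhammer p (m + 1) = qPochhammer p m * (1 - p ^ (m + 1)) :=
  prod_range_succ _ _

variable {K : Type*} [Field K] {p : K}

def qBinom (p : K) (m : ℕ) (k : ℤ) : K :=
  if 0 ≤ k ∧ k ≤ m then
    qPochhammer p m / (qPochhammer p k.toNat * qPochhammer p (m - k.toNat))
  else 0

lemma qPochhammer_ne_zero (hp : ∀ n : ℕ, p ^ (n + 1) ≠ 1) (m : ℕ) : qPochhammer p m ≠ 0 :=
  prod_ne_zero_iff.mpr fun i _ ↦ sub_ne_zero.mpr (hp i).symm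

lemma qBinom_of_neg {m : ℕ} {k : ℤ} (hk : k < 0) : qBinom p m k = 0 :=
  if_neg (by omega)

lemma qBinom_of_lt {m : ℕ} {k : ℤ} (hk : (m : ℤ) < k) : qBinom p m k = 0 :=
  if_neg (by omega)

lemma qBinom_natCast {m j : ℕ} (h : j ≤ m) :
    qBinom p m j = qPochhammer p m / (qPochhammer p j * qPochhammer p (m - j)) := by
  rw [qBinom, if_pos (by omega), Int.toNat_natCast]

lemma qBinom_sub (m : ℕ) (k : ℤ) : qBinom p m (m - k) = qBinom p m k := by
  unfold qBinom
  by_cases h : 0 ≤ k ∧ k ≤ m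
  · rw [if_pos (by omega), if_pos h, mul_comm]
    congr 3 <;> omega
  · rw [if_neg (by omega), if_neg h]

variable (hp : ∀ n : ℕ, p ^ (n + 1) ≠ 1)
include hp

lemma qBinom_zero (m : ℕ) : qBinom p m 0 = 1 := by
  rw [← Nat.cast_zero, qBinom_natCast (Nat.zero_le m), qPochhammer_zero, one_mul, Nat.sub_zero,
    div_self (qPochhammer_ne_zero hp m)]

lemma qBinom_self (m : ℕ) : qBinom p m m = 1 := by
  rw [← sub_zero (m : ℤ), qBinom_sub, qBinom_zero hp]

theorem qBinom_succ (m : ℕ) (k : ℤ) :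
    qBinom p (m + 1) k = p ^ k * qBinom p m k + qBinom p m (k - 1) := by
  rcases lt_trichotomy k 0 with hk | rfl | hk
  · rw [qBinom_of_neg hk, qBinom_of_neg hk, qBinom_of_neg (by omega)]
    simp
  · rw [qBinom_zero hp, qBinom_zero hp, qBinom_of_neg (by omega)]
    simp
  obtain ⟨j, rfl⟩ := Int.eq_ofNat_of_zero_le hk.le
  rcases lt_trichotomy j (m + 1) with hj | rfl | hj
  · obtain ⟨i, rfl⟩ : ∃ i, j = i + 1 := ⟨j - 1, by omega⟩
    obtain ⟨t, rfl⟩ : ∃ t, m = i + 1 + t := ⟨m - (i + 1), by omega⟩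
    rw [show ((i + 1 : ℕ) : ℤ) - 1 = (i : ℕ) by push_cast; ring, zpow_natCast,
      qBinom_natCast (by omega), qBinom_natCast (by omega), qBinom_natCast (by omega),
      show i + 1 + t + 1 - (i + 1) = t + 1 by omega, show i + 1 + t - (i + 1) = t by omega,
      show i + 1 + t - i = t + 1 by omega,
      qPochhammer_succ p (i + 1 + t), qPochhammer_succ p t, qPochhammer_succ p i]
    have hi := qPochhammer_ne_zero hp i
    have ht := qPochhammer_ne_zero hp t
    have hi' := sub_ne_zero.mpr (hp i).symm
    have ht' := sub_ne_zero.mpr (hp t).symm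
    -- cleared of denominators: `1 - p^(i+t+2) = p^(i+1) (1 - p^(t+1)) + (1 - p^(i+1))`
    field_simp
    ring
  · rw [qBinom_self hp, qBinom_of_lt (by omega),
      show ((m + 1 : ℕ) : ℤ) - 1 = m by push_cast; ring, qBinom_self hp]
    simp
  · rw [qBinom_of_lt (by omega), qBinom_of_lt (by omega), qBinom_of_lt (by omega)]
    simp

theorem qBinom_succ' (m : ℕ) (k : ℤ) :
    qBinom p (m + 1) k = qBinom p m k + p ^ ((m : ℤ) + 1 - k) * qBinom p m (k - 1) := by
  have h₁ : ((m + 1 : ℕ) : ℤ) - k = m - (k - 1) := by push_cast; ring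
  have h₂ : ((m + 1 : ℕ) : ℤ) - k - 1 = m - k := by push_cast; ring
  rw [← qBinom_sub (m + 1) k, qBinom_succ hp, h₂, h₁, qBinom_sub, qBinom_sub,
    show (m : ℤ) - (k - 1) = m + 1 - k by ring, add_comm]

theorem qBinom_add_two (hp0 : p ≠ 0) (N : ℕ) (j : ℤ) :
    qBinom p (N + 2) (j + 1) = (1 + p ^ (N + 1)) * qBinom p N j
      + p ^ ((N : ℤ) + 1 - j) * qBinom p N (j - 1) + p ^ (j + 1) * qBinom p N (j + 1) := by
  have hpow : p ^ (j + 1) * p ^ ((N : ℤ) + 1 - (j + 1)) = p ^ (N + 1) := by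
    rw [← zpow_add₀ hp0, ← zpow_natCast]; push_cast; ring_nf
  rw [qBinom_succ hp (N + 1), qBinom_succ' hp N (j + 1), qBinom_succ' hp N,
    add_sub_cancel_right]
  linear_combination qBinom p N j * hpow

end QBinomial

section FiniteTheta

variable {K : Type*} [NormedField K] {q : K}

def thetaTerm (q : K) (m : ℕ) (n : ℤ) : K :=
  qBinom (q ^ 2) (2 * m) (m + n) * q ^ (n ^ 2)

lemma thetaTerm_eq_zero {m : ℕ} {n : ℤ} (hn : n ∉ Icc (-(m : ℤ)) m) :
    thetaTerm q m n = 0 := by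
  rw [mem_Icc, not_and_or, not_le, not_le] at hn
  rcases hn with hn | hn
  · rw [thetaTerm, qBinom_of_neg (by omega), zero_mul]
  · rw [thetaTerm, qBinom_of_lt (by push_cast; omega), zero_mul]

lemma summable_thetaTerm (m : ℕ) : Summable (thetaTerm q m) :=
  summable_of_ne_finset_zero fun _ ↦ thetaTerm_eq_zero

variable (hq : ∀ n : ℕ, (q ^ 2) ^ (n + 1) ≠ 1) (hq0 : q ≠ 0)
include hq hq0

lemma thetaTerm_succ (m : ℕ) (n : ℤ) :
    thetaTerm q (m + 1) n = (1 + q ^ (4 * m + 2)) * thetaTerm q m n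
      + q ^ (2 * m + 1) * (thetaTerm q m (n - 1) + thetaTerm q m (n + 1)) := by
  have h₁ : (q ^ 2) ^ (2 * m + 1) = q ^ (4 * m + 2) := by rw [← pow_mul]; ring_nf
  have h₂ : (q ^ 2) ^ ((2 * m : ℕ) + 1 - ((m : ℤ) + n)) * q ^ (n ^ 2)
      = q ^ (2 * m + 1) * q ^ ((n - 1) ^ 2) := by
    rw [← zpow_natCast q 2, ← zpow_mul, ← zpow_add₀ hq0, ← zpow_natCast, ← zpow_add₀ hq0]
    push_cast; ring_nf
  have h₃ : (q ^ 2) ^ ((m : ℤ) + n + 1) * q ^ (n ^ 2)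
      = q ^ (2 * m + 1) * q ^ ((n + 1) ^ 2) := by
    rw [← zpow_natCast q 2, ← zpow_mul, ← zpow_add₀ hq0, ← zpow_natCast, ← zpow_add₀ hq0]
    push_cast; ring_nf
  simp only [thetaTerm]
  rw [show 2 * (m + 1) = 2 * m + 2 by ring,
    show ((m + 1 : ℕ) : ℤ) + n = m + n + 1 by push_cast; ring,
    qBinom_add_two hq (pow_ne_zero 2 hq0), show (m : ℤ) + (n - 1) = m + n - 1 by ring,
    show (m : ℤ) + (n + 1) = m + n + 1 by ring]
  linear_combination qBinom (q ^ 2) (2 * m) (m + n) * q ^ (n ^ 2) * h₁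
    + qBinom (q ^ 2) (2 * m) (m + n - 1) * h₂ + qBinom (q ^ 2) (2 * m) (m + n + 1) * h₃

theorem tsum_thetaTerm (m : ℕ) :
    ∑' n, thetaTerm q m n = ∏ j ∈ range m, (1 + q ^ (2 * j + 1)) ^ 2 := by
  induction m with
  | zero =>
    rw [tsum_eq_single 0 fun n hn ↦ thetaTerm_eq_zero (by simpa using hn)]
    simp [thetaTerm, qBinom_zero hq]
  | succ m ih =>
    have hs := summable_thetaTerm (q := q) m
    have hs_pred : Summable fun n ↦ thetaTerm q m (n - 1) :=
      ((Equiv.subRight (1 : ℤ)).summable_iff (f := thetaTerm q m)).mpr hs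
    have hs_succ : Summable fun n ↦ thetaTerm q m (n + 1) :=
      ((Equiv.addRight (1 : ℤ)).summable_iff (f := thetaTerm q m)).mpr hs
    have h_pred : ∑' n, thetaTerm q m (n - 1) = ∑' n, thetaTerm q m n :=
      (Equiv.subRight (1 : ℤ)).tsum_eq _
    have h_succ : ∑' n, thetaTerm q m (n + 1) = ∑' n, thetaTerm q m n :=
      (Equiv.addRight (1 : ℤ)).tsum_eq _
    rw [tsum_congr (thetaTerm_succ hq hq0 m),
      (hs.mul_left _).tsum_add ((hs_pred.add hs_succ).mul_left _), tsum_mul_left, tsum_mul_left,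
      hs_pred.tsum_add hs_succ, h_pred, h_succ, ih, prod_range_succ]
    ring

end FiniteTheta

section EulerFunction

noncomputable def eulerFunction {R : Type*} [CommRing R] [TopologicalSpace R] (x : R) : R :=
  ∏' n : ℕ, (1 - x ^ (n + 1))

variable {K : Type*} [NormedField K] {x : K}

lemma norm_pow_le_pow_of_le (hx : ‖x‖ ≤ 1) {a b : ℕ} (h : a ≤ b) : ‖x ^ b‖ ≤ ‖x‖ ^ a := by
  rw [norm_pow]
  exact pow_le_pow_of_le_one (norm_nonneg x) hx h

lemma norm_pow_succ_lt_one (hx : ‖x‖ < 1) (n : ℕ) : ‖x ^ (n + 1)‖ < 1 := by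
  rw [norm_pow]
  exact pow_lt_one₀ (norm_nonneg x) hx n.succ_ne_zero

lemma pow_succ_ne_one_of_norm_lt_one (hx : ‖x‖ < 1) (n : ℕ) : x ^ (n + 1) ≠ 1 := fun h ↦ by
  simpa [h] using norm_pow_succ_lt_one hx n

lemma summable_norm_neg_pow_succ (hx : ‖x‖ < 1) : Summable fun n : ℕ ↦ ‖-x ^ (n + 1)‖ :=
  (summable_geometric_of_lt_one (norm_nonneg x) hx).of_nonneg_of_le (fun _ ↦ norm_nonneg _)
    fun n ↦ (norm_neg _).trans_le (norm_pow_le_pow_of_le hx.le n.le_succ)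

variable [CompleteSpace K]

lemma multipliable_one_add_of_norm_le_pow {f : ℕ → K} (hx : ‖x‖ < 1)
    (hf : ∀ n, ‖f n‖ ≤ ‖x‖ ^ n) : Multipliable fun n ↦ 1 + f n :=
  multipliable_one_add_of_summable <|
    (summable_geometric_of_lt_one (norm_nonneg x) hx).of_nonneg_of_le (fun _ ↦ norm_nonneg _) hf

lemma multipliable_one_sub_pow_succ (hx : ‖x‖ < 1) :
    Multipliable fun n : ℕ ↦ 1 - x ^ (n + 1) := by
  simpa only [sub_eq_add_neg] using
    multipliable_one_add_of_summable (f := fun n ↦ -x ^ (n + 1)) (summable_norm_neg_pow_succ hx)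

lemma multipliable_one_add_pow_succ (hx : ‖x‖ < 1) :
    Multipliable fun n : ℕ ↦ 1 + x ^ (n + 1) :=
  multipliable_one_add_of_norm_le_pow hx fun n ↦ norm_pow_le_pow_of_le hx.le n.le_succ

lemma multipliable_one_add_pow_two_mul_add_one (hx : ‖x‖ < 1) :
    Multipliable fun n : ℕ ↦ 1 + x ^ (2 * n + 1) :=
  multipliable_one_add_of_norm_le_pow hx fun n ↦ norm_pow_le_pow_of_le hx.le (by omega)

lemma tendsto_qPochhammer (hx : ‖x‖ < 1) :
    Tendsto (qPochhammer x) atTop (𝓝 (eulerFunction x)) :=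
  (multipliable_one_sub_pow_succ hx).hasProd.tendsto_prod_nat

lemma eulerFunction_ne_zero (hx : ‖x‖ < 1) : eulerFunction x ≠ 0 := by
  have h_factor (n : ℕ) : 1 + -x ^ (n + 1) ≠ 0 := by
    rw [← sub_eq_add_neg]
    exact sub_ne_zero.mpr (pow_succ_ne_one_of_norm_lt_one hx n).symm
  simpa only [eulerFunction, sub_eq_add_neg] using
    tprod_one_add_ne_zero_of_summable h_factor (summable_norm_neg_pow_succ hx)

lemma eulerFunction_sq (hx : ‖x‖ < 1) :
    eulerFunction (x ^ 2) = eulerFunction x * ∏' n : ℕ, (1 + x ^ (n + 1)) := by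
  rw [eulerFunction, eulerFunction,
    ← (multipliable_one_sub_pow_succ hx).tprod_mul (multipliable_one_add_pow_succ hx)]
  exact tprod_congr fun n ↦ by ring

lemma tprod_one_add_pow_succ (hx : ‖x‖ < 1) :
    ∏' n : ℕ, (1 + x ^ (n + 1)) =
      (∏' n : ℕ, (1 + x ^ (2 * n + 1))) * ∏' n : ℕ, (1 + (x ^ 2) ^ (n + 1)) := by
  have h_odd : Multipliable fun n : ℕ ↦ 1 + x ^ (2 * n + 1 + 1) :=
    (multipliable_one_add_pow_succ (norm_pow_succ_lt_one hx 1)).congr fun n ↦ by ring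
  rw [← tprod_even_mul_odd (f := fun n ↦ 1 + x ^ (n + 1))
    (multipliable_one_add_pow_two_mul_add_one hx) h_odd]
  congr 1
  exact tprod_congr fun n ↦ by ring

theorem tprod_one_add_pow_odd_mul (hx : ‖x‖ < 1) :
    (∏' n : ℕ, (1 + x ^ (2 * n + 1))) * (eulerFunction x * eulerFunction (x ^ 4)) =
      eulerFunction (x ^ 2) ^ 2 := by
  have h₁ := eulerFunction_sq hx
  have h₂ := eulerFunction_sq (norm_pow_succ_lt_one hx 1)
  rw [← pow_mul] at h₂
  linear_combination (-eulerFunction (x ^ 2)) * h₁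
    + (∏' n : ℕ, (1 + x ^ (2 * n + 1))) * eulerFunction x * h₂
    - eulerFunction x * eulerFunction (x ^ 2) * tprod_one_add_pow_succ hx

end EulerFunction

section GaussIdentity

variable {K : Type*} [NormedField K] {p : K}

lemma qPochhammer_norm_le_norm_qPochhammer (hp : ‖p‖ ≤ 1) (m : ℕ) :
    qPochhammer ‖p‖ m ≤ ‖qPochhammer p m‖ := by
  rw [qPochhammer, qPochhammer, norm_prod]
  refine prod_le_prod (fun i _ ↦ sub_nonneg.mpr (pow_le_one₀ (norm_nonneg p) hp)) fun i _ ↦ ?_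
  simpa [norm_pow] using norm_sub_norm_le (1 : K) (p ^ (i + 1))

lemma norm_qPochhammer_mul_qPochhammer_norm_le_one (hp : ‖p‖ ≤ 1) (m : ℕ) :
    ‖qPochhammer p m‖ * qPochhammer ‖p‖ m ≤ 1 := by
  rw [qPochhammer, qPochhammer, norm_prod, ← prod_mul_distrib]
  refine prod_le_one (fun i _ ↦ mul_nonneg (norm_nonneg _)
    (sub_nonneg.mpr (pow_le_one₀ (norm_nonneg p) hp))) fun i _ ↦ ?_
  have h₁ : ‖1 - p ^ (i + 1)‖ ≤ 1 + ‖p‖ ^ (i + 1) := by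
    simpa [norm_pow] using norm_sub_le (1 : K) (p ^ (i + 1))
  have h₂ : 0 ≤ 1 - ‖p‖ ^ (i + 1) := sub_nonneg.mpr (pow_le_one₀ (norm_nonneg p) hp)
  nlinarith [mul_le_mul_of_nonneg_right h₁ h₂, sq_nonneg (‖p‖ ^ (i + 1))]

lemma exists_pos_le_qPochhammer {r : ℝ} (hr₀ : 0 ≤ r) (hr₁ : r < 1) :
    ∃ L > 0, ∀ m, L ≤ qPochhammer r m := by
  have hr : ‖r‖ < 1 := by rwa [Real.norm_of_nonneg hr₀]
  have h_anti : Antitone (qPochhammer r) := antitone_nat_of_succ_le fun m ↦ by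
    rw [qPochhammer_succ]
    refine mul_le_of_le_one_right ?_ (sub_le_self _ (by positivity))
    exact prod_nonneg fun i _ ↦ sub_nonneg.mpr (pow_le_one₀ hr₀ hr₁.le)
  have h_lim := tendsto_qPochhammer hr
  refine ⟨eulerFunction r, lt_of_le_of_ne ?_ (eulerFunction_ne_zero hr).symm,
    h_anti.le_of_tendsto h_lim⟩
  exact ge_of_tendsto' h_lim fun m ↦
    prod_nonneg fun i _ ↦ sub_nonneg.mpr (pow_le_one₀ hr₀ hr₁.le)

lemma exists_norm_qBinom_le (hp : ‖p‖ < 1) : ∃ C, ∀ m k, ‖qBinom p m k‖ ≤ C := by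
  obtain ⟨L, hL, hL_le⟩ := exists_pos_le_qPochhammer (norm_nonneg p) hp
  have h_upper (m : ℕ) : ‖qPochhammer p m‖ ≤ L⁻¹ := by
    rw [inv_eq_one_div, le_div_iff₀ hL]
    exact (mul_le_mul_of_nonneg_left (hL_le m) (norm_nonneg _)).trans
      (norm_qPochhammer_mul_qPochhammer_norm_le_one hp.le m)
  have h_lower (m : ℕ) : L ≤ ‖qPochhammer p m‖ :=
    (hL_le m).trans (qPochhammer_norm_le_norm_qPochhammer hp.le m)
  refine ⟨L⁻¹ / (L * L), fun m k ↦ ?_⟩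
  unfold qBinom
  split_ifs
  · rw [norm_div, norm_mul]
    exact div_le_div₀ (by positivity) (h_upper m) (by positivity)
      (mul_le_mul (h_lower _) (h_lower _) hL.le (norm_nonneg _))
  · rw [norm_zero]; positivity

lemma tendsto_qBinom_two_mul [CompleteSpace K] (hp : ‖p‖ < 1) (n : ℤ) :
    Tendsto (fun m : ℕ ↦ qBinom p (2 * m) (m + n)) atTop (𝓝 (eulerFunction p)⁻¹) := by
  have hφ := tendsto_qPochhammer hp
  have hφ_ne := eulerFunction_ne_zero hp
  have h_num := hφ.comp (tendsto_id.const_mul_atTop' two_pos)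
  have h_left : Tendsto (fun m : ℕ ↦ ((m : ℤ) + n).toNat) atTop atTop :=
    tendsto_atTop_atTop.mpr fun b ↦ ⟨b + n.natAbs, fun a ha ↦ by omega⟩
  have h_right : Tendsto (fun m : ℕ ↦ 2 * m - ((m : ℤ) + n).toNat) atTop atTop :=
    tendsto_atTop_atTop.mpr fun b ↦ ⟨b + n.natAbs, fun a ha ↦ by omega⟩
  have h_lim := h_num.div ((hφ.comp h_left).mul (hφ.comp h_right)) (mul_ne_zero hφ_ne hφ_ne)
  rw [div_mul_cancel_left₀ hφ_ne] at h_lim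
  refine h_lim.congr' ?_
  filter_upwards [eventually_ge_atTop n.natAbs] with m hm
  rw [qBinom, if_pos (by omega)]
  rfl

lemma summable_norm_zpow_sq {q : K} (hq : ‖q‖ < 1) : Summable fun n : ℤ ↦ ‖q ^ (n ^ 2)‖ := by
  have h (n : ℕ) : ‖q ^ ((n : ℤ) ^ 2)‖ ≤ ‖q‖ ^ n := by
    rw [← Nat.cast_pow, zpow_natCast]
    exact norm_pow_le_pow_of_le hq.le (Nat.le_self_pow two_ne_zero n)
  have hs := summable_geometric_of_lt_one (norm_nonneg q) hq
  exact .of_nat_of_neg (hs.of_nonneg_of_le (fun _ ↦ norm_nonneg _) h)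
    (hs.of_nonneg_of_le (fun _ ↦ norm_nonneg _) fun n ↦ by simpa using h n)

variable [CompleteSpace K] {q : K}

theorem tsum_zpow_sq_eq_mul_tprod (hq : ‖q‖ < 1) (hq0 : q ≠ 0) :
    ∑' n : ℤ, q ^ (n ^ 2) = eulerFunction (q ^ 2) * (∏' n : ℕ, (1 + q ^ (2 * n + 1))) ^ 2 := by
  have hq2 := norm_pow_succ_lt_one hq 1
  obtain ⟨C, hC⟩ := exists_norm_qBinom_le hq2
  have h_lim : Tendsto (fun m ↦ ∑' n, thetaTerm q m n) atTop
      (𝓝 (∑' n : ℤ, (eulerFunction (q ^ 2))⁻¹ * q ^ (n ^ 2))) :=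
    tendsto_tsum_of_dominated_convergence ((summable_norm_zpow_sq hq).mul_left C)
      (fun n ↦ (tendsto_qBinom_two_mul hq2 n).mul_const _) <| .of_forall fun m n ↦ by
        rw [thetaTerm, norm_mul]
        exact mul_le_mul_of_nonneg_right (hC _ _) (norm_nonneg _)
  have h_prod : Tendsto (fun m ↦ ∑' n, thetaTerm q m n) atTop
      (𝓝 ((∏' n : ℕ, (1 + q ^ (2 * n + 1))) ^ 2)) := by
    simp_rw [tsum_thetaTerm (pow_succ_ne_one_of_norm_lt_one hq2) hq0, prod_pow]
    exact (multipliable_one_add_pow_two_mul_add_one hq).hasProd.tendsto_prod_nat.pow 2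
  rw [← tendsto_nhds_unique h_lim h_prod, tsum_mul_left,
    mul_inv_cancel_left₀ (eulerFunction_ne_zero hq2)]

theorem tsum_zpow_sq_eq_eulerFunction (hq : ‖q‖ < 1) (hq0 : q ≠ 0) :
    ∑' n : ℤ, q ^ (n ^ 2) =
      eulerFunction (q ^ 2) ^ 5 / (eulerFunction q ^ 2 * eulerFunction (q ^ 4) ^ 2) := by
  have h₁ := eulerFunction_ne_zero hq
  have h₄ := eulerFunction_ne_zero (norm_pow_succ_lt_one hq 3)
  have h_odd := tprod_one_add_pow_odd_mul hq
  rw [tsum_zpow_sq_eq_mul_tprod hq hq0,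
    eq_div_iff (mul_ne_zero (pow_ne_zero 2 h₁) (pow_ne_zero 2 h₄))]
  linear_combination eulerFunction (q ^ 2) *
    ((∏' n : ℕ, (1 + q ^ (2 * n + 1))) * (eulerFunction q * eulerFunction (q ^ 4))
      + eulerFunction (q ^ 2) ^ 2) * h_odd

end GaussIdentity

lemma dedekindEta_nat_mul (k : ℕ) (τ : ℂ) :
    dedekindEta (k * τ) =
      cexp (π * I * τ / 12) ^ k * eulerFunction (cexp (2 * π * I * τ) ^ k) := by
  rw [dedekindEta, eulerFunction, ← Complex.exp_nat_mul, ← Complex.exp_nat_mul]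
  ring_nf

/-- `Θ(τ) = η(2τ)⁵ / (η(τ)² η(4τ)²)` on the upper half-plane. -/
theorem stmt8 (τ : ℂ) (hτ : 0 < τ.im) :
    jacobiThetaQ τ = dedekindEta (2 * τ) ^ 5 / (dedekindEta τ ^ 2 * dedekindEta (4 * τ) ^ 2) := by
  have hq : ‖cexp (2 * π * I * τ)‖ < 1 := by
    simpa [Function.Periodic.qParam] using Function.Periodic.norm_qParam_lt_one one_pos hτ
  have h_theta : jacobiThetaQ τ = ∑' n : ℤ, cexp (2 * π * I * τ) ^ (n ^ 2) :=
    tsum_congr fun n ↦ by rw [← Complex.exp_int_mul]; push_cast; ring_nf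
  have h₁ := dedekindEta_nat_mul 1 τ
  have h₂ := dedekindEta_nat_mul 2 τ
  have h₄ := dedekindEta_nat_mul 4 τ
  simp only [Nat.cast_one, one_mul, pow_one, Nat.cast_ofNat] at h₁ h₂ h₄
  have hφ₁ := eulerFunction_ne_zero hq
  have hφ₄ := eulerFunction_ne_zero (norm_pow_succ_lt_one hq 3)
  have h_exp := Complex.exp_ne_zero (π * I * τ / 12)
  rw [h_theta, tsum_zpow_sq_eq_eulerFunction hq (Complex.exp_ne_zero _), h₁, h₂, h₄]
  field_simp
end

section
/- In SL₂(ℤ), the matrix identity S⁻¹ T⁻² S = (1 0; 2 1) holds, where S = (0 −1; 1 0) and T = (1 1; 0 1); consequently the subgroup generated by T and (1 0; 2 1) is Γ₀(2), the group of integer matrices (a b; c d) with determinant 1 and c ≡ 0 (mod 2). -/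
/-!
Left multiplication by `T ^ n` sends the first column `(a, c)` of a matrix to `(a + n c, c)`, and
left multiplication by `L ^ m` sends it to `(a, c + 2 m a)`. For a matrix of `Γ₀(2)` the entry `c` is
even, so `a` is odd by the determinant condition. Reducing `a` modulo `c` gives an odd, hence
nonzero, `0 < a' < |c|`, and then the balanced residue of `c` modulo `2 a'`
is an even `c'` with `|c'| ≤ a' < |c|`. Descent on `|c|` ends at `c = 0`, where the matrix is `± T ^ b`, and
`-1 = (T L⁻¹) ^ 2`.
-/

open Matrix

open scoped MatrixGroups

/-- `S = (0 −1; 1 0) ∈ SL₂(ℤ)`. -/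
def Smat : SL(2, ℤ) := ⟨!![0, -1; 1, 0], by norm_num [Matrix.det_fin_two_of]⟩

/-- `T = (1 1; 0 1) ∈ SL₂(ℤ)`. -/
def Tmat : SL(2, ℤ) := ⟨!![1, 1; 0, 1], by norm_num [Matrix.det_fin_two_of]⟩

/-- `L = (1 0; 2 1) ∈ SL₂(ℤ)`. -/
def Lmat : SL(2, ℤ) := ⟨!![1, 0; 2, 1], by norm_num [Matrix.det_fin_two_of]⟩

open ModularGroup

theorem Int.exists_abs_add_two_mul_lt_abs {a c : ℤ} (ha : Odd a) (hc : Even c) (hc0 : c ≠ 0) :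
    ∃ n m : ℤ, |c + 2 * m * (a + n * c)| < |c| := by
  set r := a % c with hr
  have hr_eq : a + -(a / c) * c = r := by rw [hr, Int.emod_def]; ring
  have hr_odd : Odd r := hr_eq ▸ ha.add_even (hc.mul_left _)
  have hr_pos : 0 < r := lt_of_le_of_ne (Int.emod_nonneg a hc0) (fun h => by simp [← h] at hr_odd)
  have hr_lt : r < |c| := Int.emod_lt_abs a hc0
  set p := 2 * r.toNat
  have hp : (p : ℤ) = 2 * r := by omega
  refine ⟨-(a / c), -c.bdiv p, ?_⟩
  have hbmod : c + 2 * -c.bdiv p * r = c.bmod p := by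
    have := Int.bmod_add_bdiv c p
    rw [hp] at this; linarith
  have hlo := Int.le_bmod (x := c) (m := p) (by omega)
  have hhi := Int.bmod_le (x := c) (m := p) (by omega)
  rw [hp] at hlo hhi
  rw [hr_eq, hbmod, abs_lt]
  constructor <;> omega

theorem odd_apply_zero_zero_of_even_apply_one_zero {M : SL(2, ℤ)} (hc : Even (M 1 0)) :
    Odd (M 0 0) := by
  have hdet : M 0 0 * M 1 1 = 1 + M 0 1 * M 1 0 := by
    have := M.det_coe; rw [det_fin_two] at this; linarith
  exact (Int.odd_mul.mp (hdet ▸ (hc.mul_left _).one_add)).1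

theorem mem_Gamma0_two_iff {M : SL(2, ℤ)} : M ∈ CongruenceSubgroup.Gamma0 2 ↔ Even (M 1 0) := by
  rw [CongruenceSubgroup.Gamma0_mem, ZMod.intCast_eq_zero_iff_even]

theorem Tmat_eq_T : Tmat = T := rfl

theorem Smat_eq_S : Smat = S := rfl

theorem Smat_inv_mul_Tmat_zpow_neg_two_mul_Smat : Smat⁻¹ * Tmat ^ (-2 : ℤ) * Smat = Lmat := by
  rw [_root_.zpow_neg, zpow_ofNat]; decide

theorem Lmat_zpow (n : ℤ) : Lmat ^ n = Smat⁻¹ * Tmat ^ (-2 * n) * Smat := by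
  have h := conj_zpow (a := Smat⁻¹) (b := Tmat ^ (-2 : ℤ)) (i := n)
  rwa [inv_inv, ← _root_.zpow_mul, Smat_inv_mul_Tmat_zpow_neg_two_mul_Smat] at h

theorem coe_Lmat_zpow (n : ℤ) :
    ((Lmat ^ n : SL(2, ℤ)) : Matrix (Fin 2) (Fin 2) ℤ) = !![1, 0; 2 * n, 1] := by
  simp [Lmat_zpow, Tmat_eq_T, Smat_eq_S, coe_T_zpow, adjugate_fin_two_of]

theorem Tmat_zpow_mul_apply_zero_zero (n : ℤ) (M : SL(2, ℤ)) :
    (Tmat ^ n * M) 0 0 = M 0 0 + n * M 1 0 := by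
  simp [Tmat_eq_T, coe_T_zpow, mul_apply, Fin.sum_univ_two]

theorem Tmat_zpow_mul_apply_one_zero (n : ℤ) (M : SL(2, ℤ)) : (Tmat ^ n * M) 1 0 = M 1 0 := by
  simp [Tmat_eq_T]

theorem Lmat_zpow_mul_apply_one_zero (n : ℤ) (M : SL(2, ℤ)) :
    (Lmat ^ n * M) 1 0 = M 1 0 + 2 * n * M 0 0 := by
  simp [coe_Lmat_zpow, mul_apply, Fin.sum_univ_two]; ring

theorem Tmat_mem_closure : Tmat ∈ Subgroup.closure {Tmat, Lmat} :=
  Subgroup.subset_closure (by simp)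

theorem Lmat_mem_closure : Lmat ∈ Subgroup.closure {Tmat, Lmat} :=
  Subgroup.subset_closure (by simp)

theorem neg_one_mem_closure_Tmat_Lmat : (-1 : SL(2, ℤ)) ∈ Subgroup.closure {Tmat, Lmat} := by
  rw [show (-1 : SL(2, ℤ)) = (Tmat * Lmat⁻¹) ^ 2 by decide]
  exact pow_mem (mul_mem Tmat_mem_closure (inv_mem Lmat_mem_closure)) 2

theorem mem_closure_Tmat_Lmat_of_apply_one_zero_eq_zero {M : SL(2, ℤ)} (hc : M 1 0 = 0) :
    M ∈ Subgroup.closure {Tmat, Lmat} := by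
  have had : M 0 0 * M 1 1 = 1 := by
    have := M.det_coe; rwa [det_fin_two, hc, mul_zero, sub_zero] at this
  rcases Int.eq_one_or_neg_one_of_mul_eq_one' had with ⟨ha, hd⟩ | ⟨ha, hd⟩
  · rw [show M = Tmat ^ M 0 1 by ext i j; fin_cases i <;> fin_cases j <;>
      simp [Tmat_eq_T, coe_T_zpow, ha, hc, hd]]
    exact zpow_mem Tmat_mem_closure _
  · rw [show M = -1 * Tmat ^ (-M 0 1) by ext i j; fin_cases i <;> fin_cases j <;>
      simp [Tmat_eq_T, coe_T_zpow, ha, hc, hd]]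
    exact mul_mem neg_one_mem_closure_Tmat_Lmat (zpow_mem Tmat_mem_closure _)

theorem mem_closure_Tmat_Lmat_of_even_apply_one_zero {M : SL(2, ℤ)} (hc : Even (M 1 0)) :
    M ∈ Subgroup.closure {Tmat, Lmat} := by
  induction h : (M 1 0).natAbs using Nat.strong_induction_on generalizing M with
  | _ k ih =>
    rcases eq_or_ne (M 1 0) 0 with hc0 | hc0
    · exact mem_closure_Tmat_Lmat_of_apply_one_zero_eq_zero hc0
    obtain ⟨n, m, hlt⟩ := Int.exists_abs_add_two_mul_lt_abs
      (odd_apply_zero_zero_of_even_apply_one_zero hc) hc hc0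
    set M' := Lmat ^ m * (Tmat ^ n * M)
    have hM' : M' 1 0 = M 1 0 + 2 * m * (M 0 0 + n * M 1 0) := by
      rw [Lmat_zpow_mul_apply_one_zero, Tmat_zpow_mul_apply_zero_zero, Tmat_zpow_mul_apply_one_zero]
    have hM'_mem : M' ∈ Subgroup.closure {Tmat, Lmat} := by
      refine ih _ ?_ ?_ rfl
      · rw [← h, hM']; simpa only [Int.abs_eq_natAbs, Nat.cast_lt] using hlt
      · rw [hM']; exact hc.add (by simp [mul_assoc])
    rw [show M = Tmat ^ (-n) * (Lmat ^ (-m) * M') by simp only [M', ← mul_assoc]; group]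
    exact mul_mem (zpow_mem Tmat_mem_closure _) (mul_mem (zpow_mem Lmat_mem_closure _) hM'_mem)

/-- `S⁻¹ T⁻² S = (1 0; 2 1)`, and `T` together with `(1 0; 2 1)` generate `Γ₀(2)`. -/
theorem stmt15 :
    Smat⁻¹ * Tmat ^ (-2 : ℤ) * Smat = Lmat ∧
      Subgroup.closure {Tmat, Lmat} = CongruenceSubgroup.Gamma0 2 := by
  refine ⟨Smat_inv_mul_Tmat_zpow_neg_two_mul_Smat, le_antisymm ?_ ?_⟩
  · rw [Subgroup.closure_le, Set.insert_subset_iff, Set.singleton_subset_iff]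
    exact ⟨mem_Gamma0_two_iff.mpr (by decide), mem_Gamma0_two_iff.mpr (by decide)⟩
  · exact fun M hM => mem_closure_Tmat_Lmat_of_even_apply_one_zero (mem_Gamma0_two_iff.mp hM)
end
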